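/- arXiv:math/0309145 — 4 statements merged into one kernel-verified Lean document; each statement's English description precedes it below -/
import Mathlib

section
/- Let R → R' be a ring map with Spec R' → Spec R an open immersion of schemes. Then the (flat base change) functor D(R) → D(R') on derived categories admits a fully faithful right adjoint given by restriction of scalars; equivalently, for every complex N of R'-modules the canonical map N ⊗^L_R R' → N is a quasi-isomorphism. -/
/-!
An open immersion is a monomorphism of schemes, and `Spec` is fully faithful, so `R → R'` is an
epimorphism of commutative rings, i.e. `R' ⊗[R] R' ≅ R'`. For such a ring map every `R`-linear map
between `R'`-modules is already `R'`-linear, because `a ⊗ m = 1 ⊗ a • m` in `R' ⊗[R] M`. Hence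
restriction of scalars is fully faithful, the counit `R' ⊗[R] N → N` of the adjunction is an
isomorphism, and applied degreewise to a complex it is an isomorphism, in particular a
quasi-isomorphism.
-/
open CategoryTheory AlgebraicGeometry TensorProduct

universe u v

lemma CommRingCat.epi_of_mono_spec_map {R S : CommRingCat} (φ : R ⟶ S) [Mono (Spec.map φ)] :
    Epi φ := by
  have : Mono φ.op := Scheme.Spec.mono_of_mono_map ‹Mono (Spec.map φ)›
  exact unop_epi_of_mono φ.op

section IsEpi

variable {R A : Type*} [CommSemiring R] [CommSemiring A] [Algebra R A] [Algebra.IsEpi R A]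
  {M N : Type*} [AddCommMonoid M] [Module R M] [Module A M] [IsScalarTower R A M]
  [AddCommMonoid N] [Module R N] [Module A N] [IsScalarTower R A N]

lemma Algebra.IsEpi.one_tmul_smul (a : A) (m : M) : (1 : A) ⊗ₜ[R] (a • m) = a ⊗ₜ m :=
  (TensorProduct.lid' R A M).injective (by simp)

lemma LinearMap.map_smul_of_isEpi (g : M →ₗ[R] N) (a : A) (m : M) : g (a • m) = a • g m :=
  calc g (a • m) = TensorProduct.lid' R A N (g.lTensor A ((1 : A) ⊗ₜ (a • m))) := by simp
    _ = a • g m := by rw [Algebra.IsEpi.one_tmul_smul, lTensor_tmul, lid'_apply_tmul]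

end IsEpi

instance ModuleCat.full_restrictScalars_of_epi {R S : Type u} [CommRing R] [CommRing S]
    (f : R →+* S) [Epi (CommRingCat.ofHom f)] : (restrictScalars.{v} f).Full where
  map_surjective {M N} g := by
    let : Algebra R S := f.toAlgebra
    let : Module R M := Module.compHom M f
    let : Module R N := Module.compHom N f
    have : IsScalarTower R S M := ⟨fun r s m ↦ mul_smul (f r) s m⟩
    have : IsScalarTower R S N := ⟨fun r s m ↦ mul_smul (f r) s m⟩
    have : Algebra.IsEpi R S := CommRingCat.epi_iff_epi.mp ‹_›
    let g' : M →ₗ[R] N := g.hom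
    exact ⟨ofHom { g' with map_smul' := g'.map_smul_of_isEpi }, rfl⟩

/-- If `Spec R' → Spec R` is an open immersion, then the base change functor
`D(R) → D(R')` admits a fully faithful right adjoint given by restriction of scalars;
equivalently, for every complex `N` of `R'`-modules the canonical (counit) map
`N ⊗^L_R R' → N` is a quasi-isomorphism. -/
theorem stmt6 {R R' : Type u} [CommRing R] [CommRing R'] (f : R →+* R')
    (h : IsOpenImmersion (Spec.map (CommRingCat.ofHom f))) :
    (ModuleCat.restrictScalars f).Full ∧ (ModuleCat.restrictScalars f).Faithful ∧
    ∀ N : CochainComplex (ModuleCat.{u} R') ℤ,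
      QuasiIso ((NatTrans.mapHomologicalComplex
        ((ModuleCat.extendRestrictScalarsAdj f).counit) (ComplexShape.up ℤ)).app N) := by
  have : Epi (CommRingCat.ofHom f) := CommRingCat.epi_of_mono_spec_map _
  refine ⟨inferInstance, inferInstance, fun N ↦ ?_⟩
  have : IsIso ((NatTrans.mapHomologicalComplex
      (ModuleCat.extendRestrictScalarsAdj f).counit (ComplexShape.up ℤ)).app N) :=
    ((NatIso.mapHomologicalComplex (asIso (ModuleCat.extendRestrictScalarsAdj f).counit)
      _).app N).isIso_hom
  infer_instance
end

section
/- Let R → R' be a finitely presented ring homomorphism whose cotangent complex L_{R'/R} is acyclic. Then R → R' is étale (flat and unramified). -/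
universe u

/-- A finitely presented ring map whose cotangent complex is acyclic
(vanishing of `Ω = H⁰(L)` and of `H¹(L)`) is étale. -/
theorem stmt8 {R R' : Type u} [CommRing R] [CommRing R'] [Algebra R R']
    [Algebra.FinitePresentation R R']
    (h0 : Subsingleton (KaehlerDifferential R R'))
    (h1 : Subsingleton (Algebra.H1Cotangent R R')) :
    Algebra.Etale R R' :=
  { formallyEtale := ⟨h0, h1⟩ }
end

section
/- Let {A → B_i}_{i∈I} be a family of maps of commutative rings such that {Spec π₀-level maps} form a faithfully flat covering and each B_i is flat over A. Then for any A-module M, the natural map M → equalizer( ∏_i M ⊗_A B_i ⇉ ∏_{i,j} M ⊗_A B_i ⊗_A B_j ) is an isomorphism. -/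
open TensorProduct

universe u

/-!
Since `I` is finite, `C = ∏ i, B i` is a flat `A`-algebra, and the covering condition makes
`Spec C → Spec A` surjective, so `C` is faithfully flat. Finite products commute with tensor
products, so `M ⊗ C ≃ ∏ i, M ⊗ B i` and `M ⊗ (C ⊗ C) ≃ ∏ i j, M ⊗ (B i ⊗ B j)` compatibly with the
two coface maps, and the statement becomes exactness of the Amitsur complex
`M → M ⊗ C → M ⊗ (C ⊗ C)`. By faithful flatness this may be checked after `- ⊗ C`, where
multiplying the last two tensor factors of `C` gives a contracting homotopy.
-/

open LinearMap Algebra.TensorProduct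

lemma LinearMap.exact_of_homotopy {R X Y Z : Type*} [Semiring R]
    [AddCommMonoid X] [AddCommMonoid Y] [AddCommMonoid Z] [Module R X] [Module R Y] [Module R Z]
    {f : X →ₗ[R] Y} {g : Y →ₗ[R] Z} (s₀ : Y →ₗ[R] X) (s₁ : Z →ₗ[R] Y)
    (hgf : g ∘ₗ f = 0) (hs : f ∘ₗ s₀ + s₁ ∘ₗ g = id) : Function.Exact f g :=
  exact_of_comp_of_mem_range hgf fun y hy ↦
    ⟨s₀ y, by simpa [hy] using congr($hs y)⟩

section Amitsur

variable {A : Type*} [CommRing A] (M : Type*) [AddCommGroup M] [Module A M]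
  (C : Type*) [CommRing C] [Algebra A C]

noncomputable def amitsurHomotopy₀ : (M ⊗[A] C) ⊗[A] C →ₗ[A] M ⊗[A] C :=
  lTensor M (mul' A C) ∘ₗ (TensorProduct.assoc A M C C).toLinearMap

noncomputable def amitsurHomotopy₁ : (M ⊗[A] (C ⊗[A] C)) ⊗[A] C →ₗ[A] (M ⊗[A] C) ⊗[A] C :=
  (TensorProduct.assoc A M C C).symm.toLinearMap ∘ₗ
    lTensor M (lTensor C (mul' A C) ∘ₗ (TensorProduct.assoc A C C C).toLinearMap) ∘ₗ
    (TensorProduct.assoc A M (C ⊗[A] C) C).toLinearMap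

@[simp]
lemma amitsurHomotopy₀_tmul (m : M) (c c' : C) :
    amitsurHomotopy₀ M C (m ⊗ₜ[A] c ⊗ₜ[A] c') = m ⊗ₜ (c * c') := by
  simp [amitsurHomotopy₀]

@[simp]
lemma amitsurHomotopy₁_tmul (m : M) (c₁ c₂ c : C) :
    amitsurHomotopy₁ M C (m ⊗ₜ[A] (c₁ ⊗ₜ[A] c₂) ⊗ₜ[A] c) = m ⊗ₜ c₁ ⊗ₜ (c₂ * c) := by
  simp [amitsurHomotopy₁]

lemma amitsurHomotopy_add_eq_id :
    rTensor C ((TensorProduct.mk A M C).flip 1) ∘ₗ amitsurHomotopy₀ M C +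
      amitsurHomotopy₁ M C ∘ₗ rTensor C (lTensor M (includeLeftSubRight A C)) = LinearMap.id := by
  ext m c c'
  simp [tmul_sub, sub_tmul]

theorem Module.FaithfullyFlat.tmul_one_injective [Module.FaithfullyFlat A C] :
    Function.Injective fun m : M ↦ m ⊗ₜ[A] (1 : C) :=
  (TensorProduct.comm A C M).injective.comp (tensorProduct_mk_injective M)

theorem Module.FaithfullyFlat.exact_tmul_one_lTensor_includeLeftSubRight
    [Module.FaithfullyFlat A C] :
    Function.Exact ((TensorProduct.mk A M C).flip 1) (lTensor M (includeLeftSubRight A C)) := by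
  refine rTensor_reflects_exact A C _ _ <| exact_of_homotopy (amitsurHomotopy₀ M C)
    (amitsurHomotopy₁ M C) ?_ (amitsurHomotopy_add_eq_id M C)
  ext m c
  simp

end Amitsur

section Pi

variable {R : Type*} [CommSemiring R] (M : Type*) [AddCommMonoid M] [Module R M]
  {ι κ : Type*} [Fintype ι] [Fintype κ]
  {N : ι → Type*} [∀ i, AddCommMonoid (N i)] [∀ i, Module R (N i)]
  {P : κ → Type*} [∀ j, AddCommMonoid (P j)] [∀ j, Module R (P j)]

lemma TensorProduct.piRight_apply_eq_lTensor_proj [DecidableEq ι] (z : M ⊗[R] ∀ i, N i)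
    (i : ι) :
    piRight R R M N z i = lTensor M (proj i) z := by
  induction z using TensorProduct.induction_on <;> simp_all

lemma TensorProduct.ext_lTensor_proj {z z' : M ⊗[R] ∀ i, N i}
    (h : ∀ i, lTensor M (proj i) z = lTensor M (proj i) z') : z = z' := by
  classical
  refine (piRight R R M N).injective (funext fun i ↦ ?_)
  simpa only [piRight_apply_eq_lTensor_proj] using h i

lemma TensorProduct.ext_lTensor_map_proj_proj {z z' : M ⊗[R] ((∀ i, N i) ⊗[R] ∀ j, P j)}
    (h : ∀ i j, lTensor M (map (proj i) (proj j)) z = lTensor M (map (proj i) (proj j)) z') :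
    z = z' := by
  classical
  let e : (∀ i, N i) ⊗[R] (∀ j, P j) ≃ₗ[R] ∀ i j, N i ⊗[R] P j :=
    piLeft R _ N ≪≫ₗ .piCongrRight fun i ↦ piRight R R (N i) P
  have he : ∀ i j, proj j ∘ₗ proj i ∘ₗ e.toLinearMap = map (proj i) (proj j) := by
    intro i j
    ext
    simp [e]
  refine (e.lTensor M).injective (ext_lTensor_proj M fun i ↦ ext_lTensor_proj M fun j ↦ ?_)
  rw [← LinearEquiv.coe_coe, LinearEquiv.coe_lTensor]
  simpa only [← he, lTensor_comp_apply] using h i j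

end Pi

section Product

variable {A : Type*} [CommRing A] {ι : Type*} (B : ι → Type*)
  [∀ i, CommRing (B i)] [∀ i, Algebra A (B i)]

lemma Module.Flat.pi_of_finite [Finite ι] [∀ i, Module.Flat A (B i)] :
    Module.Flat A (∀ i, B i) :=
  have := Fintype.ofFinite ι
  .of_linearEquiv (DirectSum.linearEquivFunOnFintype A ι B).symm

lemma Module.FaithfullyFlat.pi_of_exists_comap_eq [Finite ι] [∀ i, Module.Flat A (B i)]
    (hcover : ∀ p : Ideal A, p.IsPrime →
      ∃ (i : ι) (q : Ideal (B i)), q.IsPrime ∧ q.comap (algebraMap A (B i)) = p) :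
    Module.FaithfullyFlat A (∀ i, B i) := by
  have := Module.Flat.pi_of_finite (A := A) B
  refine .of_comap_surjective fun p ↦ ?_
  obtain ⟨i, q, hq, hqp⟩ := hcover p.asIdeal p.isPrime
  exact ⟨⟨q.comap (Pi.evalRingHom B i), q.comap_isPrime _⟩, PrimeSpectrum.ext hqp⟩

lemma TensorProduct.map_proj_comp_includeLeft (i j : ι) :
    TensorProduct.map (proj i) (proj j) ∘ₗ
        (includeLeft : (∀ i, B i) →ₐ[A] _ ⊗[A] ∀ i, B i).toLinearMap =
      (includeLeft : B i →ₐ[A] B i ⊗[A] B j).toLinearMap ∘ₗ proj i := by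
  ext
  simp

lemma TensorProduct.map_proj_comp_includeRight (i j : ι) :
    TensorProduct.map (proj i) (proj j) ∘ₗ
        (includeRight : (∀ i, B i) →ₐ[A] (∀ i, B i) ⊗[A] _).toLinearMap =
      (includeRight : B j →ₐ[A] B i ⊗[A] B j).toLinearMap ∘ₗ proj j := by
  ext
  simp

end Product

/-- descent of modules along a finite flat covering: if each `B i` is a flat
`A`-algebra and the family covers `Spec A`, then for any `A`-module `M` the natural map from
`M` to the equalizer of `∏ i, M ⊗_A B i ⇉ ∏ i j, M ⊗_A (B i ⊗_A B j)` is an isomorphism. -/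
theorem stmt13 {A : Type u} [CommRing A] {I : Type u} [Fintype I]
    (B : I → Type u) [∀ i, CommRing (B i)] [∀ i, Algebra A (B i)]
    [∀ i, Module.Flat A (B i)]
    (hcover : ∀ (p : Ideal A), p.IsPrime → ∃ (i : I) (q : Ideal (B i)),
      q.IsPrime ∧ q.comap (algebraMap A (B i)) = p)
    (M : Type u) [AddCommGroup M] [Module A M] :
    Function.Injective (fun (m : M) (i : I) => (m ⊗ₜ[A] (1 : B i) : M ⊗[A] B i)) ∧
    (∀ x : ∀ i : I, M ⊗[A] B i,
      (∀ i j : I,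
        (LinearMap.lTensor M
          ((Algebra.TensorProduct.includeLeft :
            B i →ₐ[A] (B i ⊗[A] B j)).toLinearMap)) (x i) =
        (LinearMap.lTensor M
          ((Algebra.TensorProduct.includeRight :
            B j →ₐ[A] (B i ⊗[A] B j)).toLinearMap)) (x j)) ↔
      ∃ m : M, ∀ i : I, x i = m ⊗ₜ[A] (1 : B i)) := by
  classical
  have := Module.FaithfullyFlat.pi_of_exists_comap_eq B hcover
  refine ⟨fun m m' h ↦ ?_, fun x ↦ ⟨fun hx ↦ ?_, ?_⟩⟩
  · apply Module.FaithfullyFlat.tmul_one_injective (A := A) M (∀ i, B i)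
    refine ext_lTensor_proj M fun i ↦ ?_
    simpa using congr_fun h i
  · set y := (piRight A A M B).symm x
    have hy (i : I) : lTensor M (proj i) y = x i := by
      rw [← piRight_apply_eq_lTensor_proj, LinearEquiv.apply_symm_apply]
    have hy_cocycle : lTensor M (includeLeftSubRight A (∀ i, B i)) y = 0 := by
      rw [includeLeftSubRight, lTensor_sub, LinearMap.sub_apply, sub_eq_zero]
      refine ext_lTensor_map_proj_proj M fun i j ↦ ?_
      rw [← lTensor_comp_apply, ← lTensor_comp_apply, map_proj_comp_includeLeft,
        map_proj_comp_includeRight, lTensor_comp_apply, lTensor_comp_apply, hy, hy, hx]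
    obtain ⟨m, hm⟩ :=
      (Module.FaithfullyFlat.exact_tmul_one_lTensor_includeLeftSubRight M _ y).1 hy_cocycle
    refine ⟨m, fun i ↦ ?_⟩
    rw [← hy, ← hm]
    simp
  · rintro ⟨m, hm⟩ i j
    simp [hm]
end

section
/- Let f : A → B be a ring map and suppose the induced functor on commutative algebra categories, restriction along f from B-algebras to A-algebras, is fully faithful. Then for every B-module M, every A-algebra derivation from B into the trivial square-zero extension B ⊕ M over B is trivial; i.e. Der_A(B, M) = 0, and hence Ω_{B/A} = 0. -/
/-!
An `A`-linear derivation `d : B → M` is the same as the `A`-algebra map `b ↦ (b, d b)` from `B`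
to the square-zero extension `B ⊕ M`. Fullness of restriction along `A → B` makes every
`A`-algebra map between `B`-algebras `B`-linear, so this map must be the structure map
`b ↦ (b, 0)`, i.e. `d = 0`. Applied to the universal derivation, this kills `Ω[B⁄A]`.
-/

open CategoryTheory

universe u

section TrivSqZeroExt

variable {A B M : Type*} [CommRing A] [CommRing B] [Algebra A B] [AddCommGroup M] [Module A M]
  [Module B M] [Module Bᵐᵒᵖ M] [IsCentralScalar B M] [IsScalarTower A B M]

def Derivation.toTrivSqZeroExt (d : Derivation A B M) : B →ₐ[A] TrivSqZeroExt B M where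
  toFun b := TrivSqZeroExt.inl b + TrivSqZeroExt.inr (d b)
  map_one' := by simp
  map_mul' x y := by
    ext
    · simp [TrivSqZeroExt.fst_mul]
    · simp [TrivSqZeroExt.snd_mul, d.leibniz, add_comm]
  map_zero' := by simp
  map_add' x y := by ext <;> simp
  commutes' a := by simp [TrivSqZeroExt.algebraMap_eq_inl']

@[simp]
theorem Derivation.snd_toTrivSqZeroExt (d : Derivation A B M) (b : B) :
    (d.toTrivSqZeroExt b).snd = d b := by
  show (TrivSqZeroExt.inl b + TrivSqZeroExt.inr (d b)).snd = d b
  simp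

end TrivSqZeroExt

section UnderMapFull

variable {A B : Type u} [CommRing A] [CommRing B] [Algebra A B]

theorem AlgHom.comp_algebraMap_of_underMap_full
    (hfull : (Under.map (CommRingCat.ofHom (algebraMap A B))).Full)
    {X Y : Type u} [CommRing X] [CommRing Y] [Algebra A X] [Algebra B X] [IsScalarTower A B X]
    [Algebra A Y] [Algebra B Y] [IsScalarTower A B Y] (φ : X →ₐ[A] Y) :
    (φ : X →+* Y).comp (algebraMap B X) = algebraMap B Y := by
  let g : (Under.map (CommRingCat.ofHom (algebraMap A B))).obj
        (Under.mk (CommRingCat.ofHom (algebraMap B X))) ⟶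
      (Under.map (CommRingCat.ofHom (algebraMap A B))).obj
        (Under.mk (CommRingCat.ofHom (algebraMap B Y))) :=
    Under.homMk (CommRingCat.ofHom φ) (by
      ext a
      change φ (algebraMap B X (algebraMap A B a)) = algebraMap B Y (algebraMap A B a)
      rw [← IsScalarTower.algebraMap_apply, ← IsScalarTower.algebraMap_apply, φ.commutes])
  obtain ⟨h, hh⟩ := hfull.map_surjective g
  have hw : CommRingCat.ofHom (algebraMap B X) ≫ CommRingCat.ofHom φ =
      CommRingCat.ofHom (algebraMap B Y) := by
    have hr : h.right = CommRingCat.ofHom φ := congrArg CommaMorphism.right hh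
    rw [← hr]
    exact Under.w h
  exact congrArg CommRingCat.Hom.hom hw

theorem Derivation.eq_zero_of_underMap_full
    (hfull : (Under.map (CommRingCat.ofHom (algebraMap A B))).Full)
    {M : Type u} [AddCommGroup M] [Module A M] [Module B M] [IsScalarTower A B M]
    (d : Derivation A B M) : d = 0 := by
  let _ : Module Bᵐᵒᵖ M := Module.compHom M ((RingHom.id B).fromOpposite mul_comm)
  have _ : IsCentralScalar B M := ⟨fun _ _ => rfl⟩
  ext b
  simpa [TrivSqZeroExt.algebraMap_eq_inl] using congrArg (fun f => (f b).snd)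
    (AlgHom.comp_algebraMap_of_underMap_full hfull d.toTrivSqZeroExt)

end UnderMapFull

theorem KaehlerDifferential.subsingleton_of_D_eq_zero {A B : Type*} [CommRing A] [CommRing B]
    [Algebra A B] (h : KaehlerDifferential.D A B = 0) : Subsingleton Ω[B⁄A] := by
  have hid : (LinearMap.id : Ω[B⁄A] →ₗ[B] Ω[B⁄A]) = 0 := by
    ext
    simp [h]
  exact subsingleton_of_forall_eq 0 (LinearMap.congr_fun hid)

theorem stmt17_general {A B : Type u} [CommRing A] [CommRing B] [Algebra A B]
    (hfull : (Under.map (CommRingCat.ofHom (algebraMap A B))).Full) :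
    (∀ (M : Type u) [AddCommGroup M] [Module A M] [Module B M] [IsScalarTower A B M]
      (d : Derivation A B M), d = 0) ∧
    Subsingleton (KaehlerDifferential A B) :=
  ⟨fun _ _ _ _ _ d => d.eq_zero_of_underMap_full hfull,
    KaehlerDifferential.subsingleton_of_D_eq_zero
      ((KaehlerDifferential.D A B).eq_zero_of_underMap_full hfull)⟩

/-- If restriction along `f : A → B` from (commutative) `B`-algebras to
`A`-algebras (the functor between under-categories) is fully faithful, then every `A`-linear
derivation of `B` into any `B`-module `M` (equivalently, every `A`-algebra section of the
trivial square-zero extension `B ⊕ M → B`) vanishes; hence `Ω_{B/A} = 0`. -/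
theorem stmt17 {A B : Type u} [CommRing A] [CommRing B] [Algebra A B]
    (hfull : (Under.map (CommRingCat.ofHom (algebraMap A B))).Full)
    (hfaithful : (Under.map (CommRingCat.ofHom (algebraMap A B))).Faithful) :
    (∀ (M : Type u) [AddCommGroup M] [Module A M] [Module B M] [IsScalarTower A B M]
      (d : Derivation A B M), d = 0) ∧
    Subsingleton (KaehlerDifferential A B) :=
  stmt17_general hfull
end
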